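/- arXiv:2101.02739 — 6 statements merged into one kernel-verified Lean document; each statement's English description precedes it below -/
import Mathlib

section
/- A point (x1, x2, x3) in C^3 belongs to the open tetrablock E (defined by |x1 - conj(x2)·x3| + |x2 - conj(x1)·x3| < 1 - |x3|^2) if and only if for every z on the unit circle T, the pair (x1 + z·x2, z·x3) belongs to the open symmetrised bidisc G = {(s,p) : |s - conj(s)·p| < 1 - |p|^2}. -/
/-!
For `|z| = 1` we have `conj z = z⁻¹`, so `s - conj(s) p` at `(s, p) = (x₁ + z x₂, z x₃)` equals
`a + z b` with `a = x₁ - conj(x₂) x₃`, `b = x₂ - conj(x₁) x₃`, while `|p| = |x₃|`. The maximum of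
`|a + z b|` over the circle is `|a| + |b|`, attained when `z b` points in the direction of `a`.
-/

open Complex

lemma add_mul_sub_conj_mul_eq_of_norm_eq_one {z : ℂ} (hz : ‖z‖ = 1) (x₁ x₂ x₃ : ℂ) :
    (x₁ + z * x₂) - (starRingEnd ℂ) (x₁ + z * x₂) * (z * x₃)
      = (x₁ - (starRingEnd ℂ) x₂ * x₃) + z * (x₂ - (starRingEnd ℂ) x₁ * x₃) := by
  have hz_conj : (starRingEnd ℂ) z * z = 1 := by
    rw [mul_comm, mul_conj, normSq_eq_norm_sq, hz]
    norm_num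
  rw [map_add, map_mul]
  linear_combination (-(starRingEnd ℂ) x₂ * x₃) * hz_conj

lemma exists_norm_eq_one_norm_add_mul_eq (a b : ℂ) :
    ∃ z : ℂ, ‖z‖ = 1 ∧ ‖a + z * b‖ = ‖a‖ + ‖b‖ := by
  refine ⟨exp ((arg a - arg b : ℝ) * I), norm_exp_ofReal_mul_I _, ?_⟩
  have h_align :
      a + exp ((arg a - arg b : ℝ) * I) * b = ((‖a‖ + ‖b‖ : ℝ) : ℂ) * exp (arg a * I) := by
    have h_rot : exp ((arg a - arg b : ℝ) * I) * exp (arg b * I) = exp (arg a * I) := by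
      rw [← exp_add]
      push_cast
      ring_nf
    push_cast at h_rot ⊢
    linear_combination -norm_mul_exp_arg_mul_I a - exp ((arg a - arg b) * I) *
      norm_mul_exp_arg_mul_I b + (‖b‖ : ℂ) * h_rot
  rw [h_align, norm_mul, norm_exp_ofReal_mul_I, mul_one, norm_real,
    Real.norm_of_nonneg (by positivity)]

lemma forall_norm_eq_one_norm_add_mul_lt_iff (a b : ℂ) (r : ℝ) :
    (∀ z : ℂ, ‖z‖ = 1 → ‖a + z * b‖ < r) ↔ ‖a‖ + ‖b‖ < r := by
  constructor
  · intro h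
    obtain ⟨z, hz, hz_max⟩ := exists_norm_eq_one_norm_add_mul_eq a b
    exact hz_max ▸ h z hz
  · intro h z hz
    calc ‖a + z * b‖ ≤ ‖a‖ + ‖z * b‖ := norm_add_le _ _
      _ = ‖a‖ + ‖b‖ := by rw [norm_mul, hz, one_mul]
      _ < r := h

theorem tetrablock_iff_symmetrised_bidisc (x₁ x₂ x₃ : ℂ) :
    (‖x₁ - (starRingEnd ℂ) x₂ * x₃‖ +
      ‖x₂ - (starRingEnd ℂ) x₁ * x₃‖ < 1 - ‖x₃‖ ^ 2) ↔
    ∀ z : ℂ, ‖z‖ = 1 →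
      ‖(x₁ + z * x₂) - (starRingEnd ℂ) (x₁ + z * x₂) * (z * x₃)‖
        < 1 - ‖z * x₃‖ ^ 2 := by
  rw [← forall_norm_eq_one_norm_add_mul_lt_iff]
  refine forall₂_congr fun z hz => ?_
  rw [add_mul_sub_conj_mul_eq_of_norm_eq_one hz, norm_mul z x₃, hz, one_mul]
end

section
/- A point (x1, x2, x3) in C^3 belongs to the closed tetrablock (defined by |x1 - conj(x2)·x3| + |x2 - conj(x1)·x3| ≤ 1 - |x3|^2, together with |x1| ≤ 1 and |x2| ≤ 1) if and only if for every a in the closed unit disc, the pair (a·x1 + conj(a)·x2, x3) belongs to the closed symmetrised bidisc Γ, where Γ = {(s,p) : |s| ≤ 2 and |s - conj(s)·p| ≤ 1 - |p|^2}. -/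
open Complex ComplexConjugate

/-! Writing `u = x₁ - x̄₂ x₃` and `v = x₂ - x̄₁ x₃`, for `s = a x₁ + ā x₂` one has
`s - s̄ x₃ = a u + ā v`, and the supremum of `‖a u + ā v‖` over the closed disc is `‖u‖ + ‖v‖`,
attained on the circle by aligning the arguments of `a u` and `ā v`. So the `Γ`-condition for all
`a` says exactly `‖x₁‖ + ‖x₂‖ ≤ 2` and `‖u‖ + ‖v‖ ≤ 1 - ‖x₃‖²`; the latter forces
`‖x₁‖, ‖x₂‖ ≤ 1` via `x₁ (1 - ‖x₃‖²) = u + x₃ v̄`, except when `‖x₃‖ = 1`, where `u = 0` gives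
`‖x₁‖ = ‖x₂‖`. -/

lemma norm_mul_add_conj_mul_le {a : ℂ} (ha : ‖a‖ ≤ 1) (u v : ℂ) :
    ‖a * u + conj a * v‖ ≤ ‖u‖ + ‖v‖ :=
  calc ‖a * u + conj a * v‖ ≤ ‖a‖ * ‖u‖ + ‖a‖ * ‖v‖ := by
        simpa only [norm_mul, norm_conj] using norm_add_le (a * u) (conj a * v)
    _ ≤ ‖u‖ + ‖v‖ := by
        gcongr <;> exact mul_le_of_le_one_left (norm_nonneg _) ha

lemma exists_norm_eq_one_norm_mul_add_conj_mul_eq (u v : ℂ) :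
    ∃ a : ℂ, ‖a‖ = 1 ∧ ‖a * u + conj a * v‖ = ‖u‖ + ‖v‖ := by
  set θ : ℝ := (u.arg + v.arg) / 2
  set t : ℂ := ((θ - u.arg : ℝ) : ℂ) * I
  refine ⟨exp t, norm_exp_ofReal_mul_I _, ?_⟩
  have hu : exp t * exp (u.arg * I) = exp (θ * I) := by
    rw [← exp_add]; simp only [t]; push_cast; ring_nf
  have hv : exp (-t) * exp (v.arg * I) = exp (θ * I) := by
    rw [← exp_add]; simp only [t, θ]; push_cast; ring_nf
  have hconj : conj (exp t) = exp (-t) := by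
    rw [← exp_conj, map_mul, conj_ofReal, conj_I, mul_neg]
  have key : exp t * u + conj (exp t) * v = ((‖u‖ + ‖v‖ : ℝ) : ℂ) * exp (θ * I) := by
    rw [hconj, ofReal_add]
    linear_combination (‖u‖ : ℂ) * hu + (‖v‖ : ℂ) * hv
      - exp t * norm_mul_exp_arg_mul_I u - exp (-t) * norm_mul_exp_arg_mul_I v
  rw [key, norm_mul, norm_exp_ofReal_mul_I, mul_one, norm_real, Real.norm_of_nonneg (by positivity)]

lemma forall_norm_mul_add_conj_mul_le_iff (u v : ℂ) (r : ℝ) :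
    (∀ a : ℂ, ‖a‖ ≤ 1 → ‖a * u + conj a * v‖ ≤ r) ↔ ‖u‖ + ‖v‖ ≤ r := by
  refine ⟨fun h => ?_, fun h a ha => (norm_mul_add_conj_mul_le ha u v).trans h⟩
  obtain ⟨a, ha, hmax⟩ := exists_norm_eq_one_norm_mul_add_conj_mul_eq u v
  exact hmax ▸ h a ha.le

lemma mul_add_conj_mul_sub_conj_mul (a x₁ x₂ x₃ : ℂ) :
    (a * x₁ + conj a * x₂) - conj (a * x₁ + conj a * x₂) * x₃
      = a * (x₁ - conj x₂ * x₃) + conj a * (x₂ - conj x₁ * x₃) := by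
  simp only [map_add, map_mul, conj_conj]
  ring

lemma norm_le_one_of_norm_sub_add_norm_sub_le {x₁ x₂ x₃ : ℂ}
    (h : ‖x₁ - conj x₂ * x₃‖ + ‖x₂ - conj x₁ * x₃‖ ≤ 1 - ‖x₃‖ ^ 2)
    (h₁₂ : ‖x₁‖ + ‖x₂‖ ≤ 2) : ‖x₁‖ ≤ 1 := by
  set u := x₁ - conj x₂ * x₃
  set v := x₂ - conj x₁ * x₃
  have hx₃ : ‖x₃‖ ≤ 1 := by
    nlinarith [norm_nonneg u, norm_nonneg v, norm_nonneg x₃]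
  have hid : x₁ * ((1 - ‖x₃‖ ^ 2 : ℝ) : ℂ) = u + x₃ * conj v := by
    push_cast
    rw [← mul_conj']
    simp only [u, v, map_sub, map_mul, conj_conj]
    ring
  have hscaled : ‖x₁‖ * (1 - ‖x₃‖ ^ 2) ≤ 1 - ‖x₃‖ ^ 2 :=
    calc ‖x₁‖ * (1 - ‖x₃‖ ^ 2) ≤ ‖x₁ * ((1 - ‖x₃‖ ^ 2 : ℝ) : ℂ)‖ := by
          rw [norm_mul, norm_real, Real.norm_eq_abs]
          exact mul_le_mul_of_nonneg_left (le_abs_self _) (norm_nonneg _)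
      _ ≤ ‖u‖ + ‖x₃‖ * ‖v‖ := by
          simpa only [hid, norm_mul, norm_conj] using norm_add_le u (x₃ * conj v)
      _ ≤ 1 - ‖x₃‖ ^ 2 := by nlinarith [norm_nonneg v]
  have hdiff : ‖x₁‖ ≤ ‖u‖ + ‖x₂‖ :=
    calc ‖x₁‖ = ‖u + conj x₂ * x₃‖ := by rw [sub_add_cancel]
      _ ≤ ‖u‖ + ‖x₂‖ * ‖x₃‖ := by
          simpa only [norm_mul, norm_conj] using norm_add_le u (conj x₂ * x₃)
      _ ≤ ‖u‖ + ‖x₂‖ := by nlinarith [norm_nonneg x₂]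
  -- If `‖x₁‖ > 1`, then `hscaled` forces `‖x₃‖ = 1`, hence `u = 0`, against `hdiff` and `h₁₂`.
  nlinarith [norm_nonneg v]

theorem closed_tetrablock_iff_Gamma (x₁ x₂ x₃ : ℂ) :
    (‖x₁ - (starRingEnd ℂ) x₂ * x₃‖ +
        ‖x₂ - (starRingEnd ℂ) x₁ * x₃‖ ≤ 1 - ‖x₃‖ ^ 2 ∧
      ‖x₁‖ ≤ 1 ∧ ‖x₂‖ ≤ 1) ↔
    ∀ a : ℂ, ‖a‖ ≤ 1 →
      (‖a * x₁ + (starRingEnd ℂ) a * x₂‖ ≤ 2 ∧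
        ‖(a * x₁ + (starRingEnd ℂ) a * x₂) -
            (starRingEnd ℂ) (a * x₁ + (starRingEnd ℂ) a * x₂) * x₃‖
          ≤ 1 - ‖x₃‖ ^ 2) := by
  simp only [mul_add_conj_mul_sub_conj_mul, forall₂_and, forall_norm_mul_add_conj_mul_le_iff]
  constructor
  · rintro ⟨h, h₁, h₂⟩
    exact ⟨by linarith, h⟩
  · rintro ⟨h₁₂, h⟩
    refine ⟨h, norm_le_one_of_norm_sub_add_norm_sub_le h h₁₂, ?_⟩
    rw [add_comm] at h h₁₂
    exact norm_le_one_of_norm_sub_add_norm_sub_le h h₁₂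
end

section
/- Let s, p ∈ C with |s| ≤ 2 and |p| ≤ 1. Then (s,p) belongs to the closed symmetrised bidisc Γ = {(s,p) : |s| ≤ 2 and |s - conj(s)p| ≤ 1 - |p|^2} if and only if (s/2, s/2, p) belongs to the closed tetrablock Ē = {(x1,x2,x3) : |x1 - conj(x2)x3| + |x2 - conj(x1)x3| ≤ 1 - |x3|^2, |x1| ≤ 1, |x2| ≤ 1}. -/
open Complex

theorem half_sub_star_half_mul {K : Type*} [Field K] [StarRing K] (x p : K) :
    x / 2 - starRingEnd K (x / 2) * p = (x - starRingEnd K x * p) / 2 := by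
  rw [map_div₀, map_ofNat, sub_div, div_mul_eq_mul_div]

theorem RCLike.norm_half_add_norm_half {𝕜 : Type*} [RCLike 𝕜] (x : 𝕜) :
    ‖x / 2‖ + ‖x / 2‖ = ‖x‖ := by
  rw [← two_mul, norm_div, RCLike.norm_ofNat, mul_div_cancel₀ _ two_ne_zero]

theorem RCLike.norm_half_le_one_iff {𝕜 : Type*} [RCLike 𝕜] (x : 𝕜) :
    ‖x / 2‖ ≤ 1 ↔ ‖x‖ ≤ 2 := by
  rw [norm_div, RCLike.norm_ofNat, div_le_one two_pos]

theorem Gamma_iff_half_s_half_s_p_general (s p : ℂ) :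
    (‖s‖ ≤ 2 ∧ ‖s - (starRingEnd ℂ) s * p‖ ≤ 1 - ‖p‖ ^ 2) ↔
    (‖s / 2 - (starRingEnd ℂ) (s / 2) * p‖ +
        ‖s / 2 - (starRingEnd ℂ) (s / 2) * p‖ ≤ 1 - ‖p‖ ^ 2 ∧
      ‖s / 2‖ ≤ 1 ∧ ‖s / 2‖ ≤ 1) := by
  rw [half_sub_star_half_mul, RCLike.norm_half_add_norm_half, RCLike.norm_half_le_one_iff,
    and_self, and_comm]

theorem Gamma_iff_half_s_half_s_p (s p : ℂ) (hs : ‖s‖ ≤ 2)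
    (hp : ‖p‖ ≤ 1) :
    (‖s‖ ≤ 2 ∧ ‖s - (starRingEnd ℂ) s * p‖ ≤ 1 - ‖p‖ ^ 2) ↔
    (‖s / 2 - (starRingEnd ℂ) (s / 2) * p‖ +
        ‖s / 2 - (starRingEnd ℂ) (s / 2) * p‖ ≤ 1 - ‖p‖ ^ 2 ∧
      ‖s / 2‖ ≤ 1 ∧ ‖s / 2‖ ≤ 1) :=
  Gamma_iff_half_s_half_s_p_general s p
end

section
/- If (x1, x2, x3) lies in the distinguished boundary of the tetrablock, i.e., x1 = conj(x2)·x3, |x3| = 1, and |x2| ≤ 1, then the pair (i·x1 − i·x2, x3) lies in the distinguished boundary of the symmetrised bidisc: |x3| = 1, |i·x1 − i·x2| ≤ 2, and (i·x1 − i·x2) = conj(i·x1 − i·x2)·x3. -/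
open Complex ComplexConjugate

theorem norm_le_one_of_eq_conj_mul {x₁ x₂ x₃ : ℂ} (h1 : x₁ = conj x₂ * x₃) (h3 : ‖x₃‖ = 1)
    (h2 : ‖x₂‖ ≤ 1) : ‖x₁‖ ≤ 1 := by
  rwa [h1, norm_mul, norm_conj, h3, mul_one]

theorem eq_conj_mul_of_eq_conj_mul {x₁ x₂ x₃ : ℂ} (h1 : x₁ = conj x₂ * x₃) (h3 : ‖x₃‖ = 1) :
    x₂ = conj x₁ * x₃ := by
  have hx₃ : conj x₃ * x₃ = 1 := by
    rw [mul_comm, mul_conj, normSq_eq_norm_sq, h3]; norm_num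
  rw [h1, map_mul, conj_conj, mul_assoc, hx₃, mul_one]

theorem I_mul_sub_eq_conj_mul {x₁ x₂ x₃ : ℂ} (h1 : x₁ = conj x₂ * x₃) (h2 : x₂ = conj x₁ * x₃) :
    I * x₁ - I * x₂ = conj (I * x₁ - I * x₂) * x₃ := by
  rw [map_sub, map_mul, map_mul, conj_I, sub_mul, mul_assoc, mul_assoc, ← h1, ← h2]
  ring

theorem dist_bdry_tetrablock_diff (x₁ x₂ x₃ : ℂ)
    (h1 : x₁ = (starRingEnd ℂ) x₂ * x₃) (h3 : ‖x₃‖ = 1)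
    (h2 : ‖x₂‖ ≤ 1) :
    ‖x₃‖ = 1 ∧ ‖Complex.I * x₁ - Complex.I * x₂‖ ≤ 2 ∧
      Complex.I * x₁ - Complex.I * x₂ =
        (starRingEnd ℂ) (Complex.I * x₁ - Complex.I * x₂) * x₃ := by
  have h1' : ‖x₁‖ ≤ 1 := norm_le_one_of_eq_conj_mul h1 h3 h2
  refine ⟨h3, ?_, I_mul_sub_eq_conj_mul h1 (eq_conj_mul_of_eq_conj_mul h1 h3)⟩
  calc ‖I * x₁ - I * x₂‖ = ‖x₁ - x₂‖ := by rw [← mul_sub, norm_mul, norm_I, one_mul]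
    _ ≤ ‖x₁‖ + ‖x₂‖ := norm_sub_le _ _
    _ ≤ 2 := by linarith
end

section
/- Let β1, β2 ∈ C with |β1| + |β2| = 1, and let x3 ∈ C with |x3| ≤ 1. Set x1 = β1 + conj(β2)·x3 and x2 = β2 + conj(β1)·x3. Then |x1 - conj(x2)·x3| + |x2 - conj(x1)·x3| = 1 - |x3|^2, and |x1| ≤ 1, |x2| ≤ 1; hence (x1, x2, x3) lies in the topological boundary of the tetrablock. -/
open ComplexConjugate

/-!
With `x₁ = β₁ + β̄₂ x₃` and `x₂ = β₂ + β̄₁ x₃`, the cross terms cancel in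
`x₁ - x̄₂ x₃ = β₁ (1 - |x₃|²)` and `x₂ - x̄₁ x₃ = β₂ (1 - |x₃|²)`, so the boundary equation
follows from `|β₁| + |β₂| = 1`; the bounds `|xᵢ| ≤ 1` are the triangle inequality.
-/

theorem add_conj_mul_sub_conj_mul_eq {R : Type*} [CommRing R] [StarRing R] (b₁ b₂ z : R) :
    (b₁ + conj b₂ * z) - conj (b₂ + conj b₁ * z) * z = b₁ * (1 - conj z * z) := by
  simp only [map_add, map_mul, RingHomCompTriple.comp_apply, RingHom.id_apply]
  ring

section RCLike

variable {𝕜 : Type*} [RCLike 𝕜]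

theorem RCLike.norm_mul_one_sub_conj_mul_self {z : 𝕜} (hz : ‖z‖ ≤ 1) (b : 𝕜) :
    ‖b * (1 - conj z * z)‖ = ‖b‖ * (1 - ‖z‖ ^ 2) := by
  have hz2 : 0 ≤ 1 - ‖z‖ ^ 2 := by nlinarith [norm_nonneg z]
  rw [RCLike.conj_mul, norm_mul, ← RCLike.ofReal_pow, ← RCLike.ofReal_one,
    ← RCLike.ofReal_sub, RCLike.norm_ofReal, abs_of_nonneg hz2]

theorem RCLike.norm_add_conj_mul_le {z : 𝕜} (hz : ‖z‖ ≤ 1) (b₁ b₂ : 𝕜) :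
    ‖b₁ + conj b₂ * z‖ ≤ ‖b₁‖ + ‖b₂‖ :=
  calc ‖b₁ + conj b₂ * z‖ ≤ ‖b₁‖ + ‖b₂‖ * ‖z‖ := by
        simpa only [norm_mul, RCLike.norm_conj] using norm_add_le b₁ (conj b₂ * z)
    _ ≤ ‖b₁‖ + ‖b₂‖ := by
        gcongr
        exact mul_le_of_le_one_right (norm_nonneg b₂) hz

end RCLike

theorem superficial_point (β₁ β₂ x₃ : ℂ)
    (hβ : ‖β₁‖ + ‖β₂‖ = 1) (hx₃ : ‖x₃‖ ≤ 1) :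
    ‖((β₁ + (starRingEnd ℂ) β₂ * x₃) -
        (starRingEnd ℂ) (β₂ + (starRingEnd ℂ) β₁ * x₃) * x₃)‖ +
      ‖((β₂ + (starRingEnd ℂ) β₁ * x₃) -
        (starRingEnd ℂ) (β₁ + (starRingEnd ℂ) β₂ * x₃) * x₃)‖
      = 1 - ‖x₃‖ ^ 2 ∧
    ‖(β₁ + (starRingEnd ℂ) β₂ * x₃)‖ ≤ 1 ∧
    ‖(β₂ + (starRingEnd ℂ) β₁ * x₃)‖ ≤ 1 := by
  refine ⟨?_, (RCLike.norm_add_conj_mul_le hx₃ β₁ β₂).trans_eq hβ, ?_⟩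
  · rw [add_conj_mul_sub_conj_mul_eq, add_conj_mul_sub_conj_mul_eq,
      RCLike.norm_mul_one_sub_conj_mul_self hx₃, RCLike.norm_mul_one_sub_conj_mul_self hx₃,
      ← add_mul, hβ, one_mul]
  · exact (RCLike.norm_add_conj_mul_le hx₃ β₂ β₁).trans_eq ((add_comm _ _).trans hβ)
end

section
/- Let β1, β2 be nonzero complex numbers with |β1| + |β2| = 1, and set ω = conj(β2)/|β2| and k = β1/|β1|. Then for every x3 ∈ C with |β2 + conj(β1)·x3| < 1 (ensuring the denominator is nonzero for |ω| = 1), the Möbius-type expression Ψ_ω(x1, x2, x3) = (x3·ω − x1)/(x2·ω − 1), evaluated at x1 = β1 + conj(β2)·x3 and x2 = β2 + conj(β1)·x3, equals k. -/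
open Complex ComplexConjugate

/-- At a pole `x₂ * ω = 1` this takes the junk value `0`. -/
def Psi {K : Type*} [Field K] (ω x₁ x₂ x₃ : K) : K := (x₃ * ω - x₁) / (x₂ * ω - 1)

/-- On the family `x₁ = b₁ + c₂ x₃`, `x₂ = b₂ + c₁ x₃` the numerator of `Ψ_ω` minus `k` times
its denominator is `x₃ (ω - c₂ - k c₁ ω) + (k - b₁ - k b₂ ω)`. -/
theorem Psi_eq_of_linear_family {K : Type*} [Field K] {ω k b₁ b₂ c₁ c₂ : K} (x₃ : K)
    (h₁ : ω - c₂ - k * c₁ * ω = 0) (h₂ : k - b₁ - k * b₂ * ω = 0)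
    (hden : (b₂ + c₁ * x₃) * ω - 1 ≠ 0) :
    Psi ω (b₁ + c₂ * x₃) (b₂ + c₁ * x₃) x₃ = k := by
  rw [Psi, div_eq_iff hden]
  linear_combination x₃ * h₁ + h₂

theorem mul_sub_one_ne_zero {R : Type*} [NormedRing R] [NormOneClass R] {a b : R}
    (ha : ‖a‖ < 1) (hb : ‖b‖ ≤ 1) : a * b - 1 ≠ 0 := by
  refine sub_ne_zero.mpr fun h ↦ (lt_irrefl (1 : ℝ)) ?_
  calc 1 = ‖a * b‖ := by rw [h, norm_one]
    _ ≤ ‖a‖ * ‖b‖ := norm_mul_le a b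
    _ ≤ ‖a‖ := mul_le_of_le_one_right (norm_nonneg a) hb
    _ < 1 := ha

namespace Complex

theorem div_norm_mul_norm (z : ℂ) : z / ‖z‖ * ‖z‖ = z :=
  div_mul_cancel_of_imp fun h ↦ norm_eq_zero.mp (ofReal_eq_zero.mp h)

theorem div_norm_mul_conj (z : ℂ) : z / ‖z‖ * conj z = ‖z‖ := by
  rw [div_mul_eq_mul_div, mul_conj', sq, mul_self_div_self]

theorem norm_div_norm_le_one (z : ℂ) : ‖z / ‖z‖‖ ≤ 1 := by
  rw [norm_div, norm_real, norm_norm]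
  exact div_self_le_one _

end Complex

theorem Psi_omega_constant_general (β₁ β₂ : ℂ)
    (hβ : ‖β₁‖ + ‖β₂‖ = 1)
    (ω k : ℂ) (hω : ω = (starRingEnd ℂ) β₂ / (‖β₂‖ : ℂ))
    (hk : k = β₁ / (‖β₁‖ : ℂ)) :
    ∀ x₃ : ℂ, ‖β₂ + (starRingEnd ℂ) β₁ * x₃‖ < 1 →
      (x₃ * ω - (β₁ + (starRingEnd ℂ) β₂ * x₃)) /
        ((β₂ + (starRingEnd ℂ) β₁ * x₃) * ω - 1) = k := by
  intro x₃ hx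
  have hsum : (‖β₁‖ : ℂ) + ‖β₂‖ = 1 := by exact_mod_cast hβ
  have hω₂ : ω * ‖β₂‖ = conj β₂ := by
    rw [hω, ← norm_conj β₂]; exact div_norm_mul_norm _
  have hβ₂ω : β₂ * ω = ‖β₂‖ := by
    rw [hω, mul_comm, ← norm_conj β₂]
    simpa using div_norm_mul_conj (conj β₂)
  have hk₁ : k * ‖β₁‖ = β₁ := hk ▸ div_norm_mul_norm β₁
  have hkβ₁ : k * conj β₁ = ‖β₁‖ := hk ▸ div_norm_mul_conj β₁
  have hden : (β₂ + conj β₁ * x₃) * ω - 1 ≠ 0 := mul_sub_one_ne_zero hx (by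
    rw [hω, ← norm_conj β₂]; exact norm_div_norm_le_one _)
  refine Psi_eq_of_linear_family x₃ ?_ ?_ hden
  · linear_combination hω₂ - ω * hkβ₁ - ω * hsum
  · linear_combination hk₁ - k * hβ₂ω - k * hsum

theorem Psi_omega_constant (β₁ β₂ : ℂ) (hβ₁ : β₁ ≠ 0) (hβ₂ : β₂ ≠ 0)
    (hβ : ‖β₁‖ + ‖β₂‖ = 1)
    (ω k : ℂ) (hω : ω = (starRingEnd ℂ) β₂ / (‖β₂‖ : ℂ))
    (hk : k = β₁ / (‖β₁‖ : ℂ)) :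
    ∀ x₃ : ℂ, ‖β₂ + (starRingEnd ℂ) β₁ * x₃‖ < 1 →
      (x₃ * ω - (β₁ + (starRingEnd ℂ) β₂ * x₃)) /
        ((β₂ + (starRingEnd ℂ) β₁ * x₃) * ω - 1) = k :=
  Psi_omega_constant_general β₁ β₂ hβ ω k hω hk
end
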